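/- Let M be an injective left R-module. M is Σ-injective if and only if every finitely injective submodule of E(M^(ℵ₀)) is injective. -/

import Mathlib

open DirectSum

/-- A module `M` is finitely injective if every finite subset of `M` is contained in an
injective submodule of `M`. -/
def FinitelyInjective (R : Type*) [Ring R] (M : Type*) [AddCommGroup M] [Module R M] : Prop :=
  ∀ s : Finset M, ∃ N : Submodule R M, Module.Injective R N ∧ ∀ x ∈ s, x ∈ N

/-- An injective module `M` is `Σ`-injective if every direct sum of copies of `M`
is injective. -/
def SigmaInjective (R : Type u) [Ring R] (M : Type v) [AddCommGroup M] [Module R M] : Prop :=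
  ∀ ι : Type v, Module.Injective R (⨁ _ : ι, M)

/-- A module is a direct sum of injective modules if it is the internal direct sum of a
family of injective submodules. -/
def IsDirectSumOfInjectives (R : Type u) [Ring R] (M : Type v) [AddCommGroup M]
    [Module R M] : Prop :=
  ∃ (ι : Type v) (_ : DecidableEq ι) (p : ι → Submodule R M),
    (∀ i, Module.Injective R (p i)) ∧ DirectSum.IsInternal p

/-!
If `M` is Σ-injective, the injective essential submodule `M^(ℕ)` of `E` is all of `E`, so `E^(ℕ)`
is injective. Injectivity of `W^(ℕ)` bounds the supports of all finitely supported multiples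
`a • c` of a sequence `c` by one finite set; for `W = E` this gives the ascending chain condition
on annihilators of elements. Given a finitely injective `N ≤ E` and a map `I → N` which is
multiplication by `c ∈ E`, pick `d ∈ N` with `ann (c - d)` maximal. If `a (c - d) ≠ 0` for some
`a ∈ I`, an injective submodule of `N` containing `a (c - d)` yields `e ∈ N` with
`ann (c - d - e)` strictly larger; so `I (c - d) = 0`, and `d` realizes the map.

Conversely, finite subsets of `M^(ℕ)` lie in the injective submodules `M^F`, `F` finite, so the
hypothesis makes `M^(ℕ)` injective. For a map `I → M^(ι)` which is multiplication by `c ∈ M^ι`,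
the same support bound applied to `W = M` shows that `c` may be cut down to a finite support. -/

universe u v

section

variable {R : Type u} [Ring R]

theorem Module.Injective.of_linearEquiv {A B : Type v} [AddCommGroup A] [Module R A]
    [AddCommGroup B] [Module R B] (e : A ≃ₗ[R] B) (h : Module.Injective R A) :
    Module.Injective R B where
  out X Y _ _ _ _ i hi f := by
    obtain ⟨g, hg⟩ := h.out i hi (e.symm.toLinearMap ∘ₗ f)
    exact ⟨e.toLinearMap ∘ₗ g, fun x => by simp [hg]⟩

theorem Module.injective_pi {ι : Type v} {W : ι → Type v} [∀ i, AddCommGroup (W i)]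
    [∀ i, Module R (W i)] [∀ i, Module.Injective R (W i)] :
    Module.Injective R (∀ i, W i) where
  out X Y _ _ _ _ i hi f := by
    choose g hg using fun k => Module.Injective.out i hi ((LinearMap.proj k).comp f)
    exact ⟨LinearMap.pi g, fun x => funext fun k => by simpa using hg k x⟩

theorem Module.injective_of_forall_exists_le_mem_domain {Q : Type v} [AddCommGroup Q]
    [Module R Q]
    (h : ∀ ⦃Y : Type v⦄ [AddCommGroup Y] [Module R Y] (g : Y →ₗ.[R] Q) (y : Y),
      ∃ g' : Y →ₗ.[R] Q, g ≤ g' ∧ y ∈ g'.domain) :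
    Module.Injective R Q where
  out X Y _ _ _ _ i hi f := by
    have : Fact (Function.Injective i) := ⟨hi⟩
    set F := Module.Baer.extensionOfMax i f
    have hF : F.domain = ⊤ := by
      refine eq_top_iff.2 fun y _ => ?_
      obtain ⟨g, hFg, hy⟩ := h F.toLinearPMap y
      have hmax := Module.Baer.extensionOfMax_is_max i f
        ⟨g, F.le.trans hFg.1, fun m => (F.is_extension m).trans (hFg.2 rfl)⟩ hFg
      rw [show F = _ from hmax.symm]
      exact hy
    exact ⟨F.toFun ∘ₗ (LinearEquiv.ofTop _ hF).symm.toLinearMap,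
      fun x => (F.is_extension x).symm⟩

/-- Baer's criterion, tested only on maps from ideals that become multiplication by an element
of an injective module `E`. `E` itself need not satisfy Baer's criterion: `Module.Injective`
only tests modules in universe `v` (compare `Module.Baer.of_injective`, which needs
`Small.{v} R`). -/
theorem Module.injective_of_baer_along {Q E : Type v} [AddCommGroup Q] [Module R Q]
    [AddCommGroup E] [Module R E] [Module.Injective R E] (ε : Q →ₗ[R] E)
    (h : ∀ (I : Ideal R) (g : I →ₗ[R] Q) (c : E), (∀ r : I, ε (g r) = (r : R) • c) →
      ∃ d : Q, ∀ r : I, g r = (r : R) • d) :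
    Module.Injective R Q := by
  refine Module.injective_of_forall_exists_le_mem_domain fun Y _ _ g y => ?_
  obtain ⟨G, hG⟩ := Module.Injective.out g.domain.subtype g.domain.injective_subtype
    (ε ∘ₗ g.toFun)
  let I : Ideal R := g.domain.comap (LinearMap.toSpanSingleton R Y y)
  let gI : I →ₗ[R] Q := g.toFun ∘ₗ (LinearMap.toSpanSingleton R Y y).restrict fun _ hr => hr
  obtain ⟨d, hd⟩ := h I gI (G y) fun r => by
    rw [← map_smul]
    exact (hG ⟨_, r.2⟩).symm
  have hgy : ∀ (x : g.domain) (r : R), (x : Y) = r • y → g x = r • d := by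
    rintro ⟨x, hx⟩ r rfl
    exact hd ⟨r, hx⟩
  let gy : Y →ₗ.[R] Q := LinearPMap.mkSpanSingleton' y d fun c hc => by
    rw [RingHom.id_apply, ← hgy 0 c hc.symm, LinearPMap.map_zero]
  have hcompat : ∀ (x : g.domain) (z : gy.domain), (x : Y) = z → g x = gy z := by
    rintro x ⟨z, hz⟩ hxz
    obtain ⟨r, rfl⟩ := Submodule.mem_span_singleton.1 hz
    rw [LinearPMap.mkSpanSingleton'_apply]
    exact hgy x r hxz
  exact ⟨g.sup gy hcompat, g.left_le_sup gy hcompat,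
    Submodule.mem_sup_right (Submodule.mem_span_singleton_self y)⟩

theorem Submodule.exists_mem_smul_eq_of_injective {B : Type*} [AddCommGroup B] [Module R B]
    (N : Submodule R B) [Module.Injective R N] (b : B) :
    ∃ e ∈ N, ∀ r : R, r • b ∈ N → r • b = r • e := by
  let C := R ∙ b
  obtain ⟨ψ, hψ⟩ := Module.Injective.out (Submodule.inclusion (inf_le_left : C ⊓ N ≤ C))
    (Submodule.inclusion_injective _) (Submodule.inclusion inf_le_right)
  have hb : b ∈ C := Submodule.mem_span_singleton_self b
  refine ⟨ψ ⟨b, hb⟩, (ψ _).2, fun r hr => ?_⟩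
  have := congrArg Subtype.val (hψ ⟨r • b, C.smul_mem r hb, hr⟩)
  rw [← Submodule.coe_smul, ← map_smul]
  exact this.symm

theorem exists_finset_support_smul_subset {α W : Type*} [AddCommGroup W] [Module R W]
    [Module.Injective R (α →₀ W)] (c : α → W) :
    ∃ S : Finset α, ∀ a : R, (a • c).support.Finite → (a • c).support ⊆ S := by
  let Φ := LinearMap.range (Finsupp.lcoeFun : (α →₀ W) →ₗ[R] α → W)
  have : Module.Injective R Φ := Module.Injective.of_linearEquiv
    (LinearEquiv.ofInjective _ DFunLike.coe_injective) inferInstance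
  obtain ⟨_, ⟨w, rfl⟩, hw⟩ := Φ.exists_mem_smul_eq_of_injective c
  refine ⟨w.support, fun a ha => ?_⟩
  rw [hw a ⟨Finsupp.ofSupportFinite _ ha, rfl⟩]
  exact (Function.support_smul_subset_right _ _).trans (by simp)

theorem exists_finite_support_smul_subset {W : Type*} [AddCommGroup W] [Module R W]
    [Module.Injective R (ℕ →₀ W)] {α : Type*} (c : α → W) :
    ∃ S : Set α, S.Finite ∧ ∀ a : R, (a • c).support.Finite → (a • c).support ⊆ S := by
  refine ⟨⋃ (a : R) (_ : (a • c).support.Finite), (a • c).support, ?_,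
    fun a ha => Set.subset_biUnion_of_mem (u := fun a => (a • c).support) ha⟩
  by_contra hinf
  let emb := Set.Infinite.natEmbedding _ hinf
  have hemb : Function.Injective fun n => (emb n : α) := Subtype.val_injective.comp emb.injective
  obtain ⟨S, hS⟩ := exists_finset_support_smul_subset (R := R) fun n => c (emb n)
  obtain ⟨n, hn⟩ := S.exists_notMem
  obtain ⟨a, ha, hna⟩ := Set.mem_iUnion₂.1 (emb n).2
  exact hn (hS a (ha.preimage hemb.injOn) hna)

theorem wellFounded_torsionOf_gt {W : Type*} [AddCommGroup W] [Module R W]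
    [Module.Injective R (ℕ →₀ W)] :
    WellFounded fun x y : W => Ideal.torsionOf R W y < Ideal.torsionOf R W x := by
  refine wellFounded_iff_isEmpty_descending_chain.2 ⟨fun ⟨e, he⟩ => ?_⟩
  have hmono : StrictMono fun n => Ideal.torsionOf R W (e n) := strictMono_nat_of_lt_succ he
  obtain ⟨S, hSfin, hS⟩ := exists_finite_support_smul_subset (R := R) e
  obtain ⟨n, hn⟩ := hSfin.exists_notMem
  obtain ⟨a, ha, han⟩ := SetLike.exists_of_lt (he n)
  have hfin : (a • e).support.Finite := (Set.finite_Iio (n + 1)).subset fun m hm => by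
    by_contra hm'
    exact hm (hmono.monotone (not_lt.1 hm') ha)
  exact han (Function.notMem_support.1 fun h => hn (hS a hfin h))

theorem FinitelyInjective.exists_torsionOf_lt {E : Type*} [AddCommGroup E] [Module R E]
    {N : Submodule R E} (hN : FinitelyInjective R N) {x : E} {a : R} (ha : a • x ∈ N)
    (hax : a • x ≠ 0) : ∃ e ∈ N, Ideal.torsionOf R E x < Ideal.torsionOf R E (x - e) := by
  obtain ⟨N₀, hN₀, hmem⟩ := hN {⟨a • x, ha⟩}
  let N₁ := N₀.map N.subtype
  have : Module.Injective R N₁ :=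
    Module.Injective.of_linearEquiv (N₀.equivMapOfInjective _ N.injective_subtype) hN₀
  have haN₁ : a • x ∈ N₁ := ⟨_, hmem _ (Finset.mem_singleton_self _), rfl⟩
  obtain ⟨e, heN₁, he⟩ := N₁.exists_mem_smul_eq_of_injective x
  have hsub : ∀ r : R, r • x ∈ N₁ → r ∈ Ideal.torsionOf R E (x - e) := fun r hr => by
    rw [Ideal.mem_torsionOf_iff, smul_sub, he r hr, sub_self]
  refine ⟨e, Submodule.map_subtype_le N N₀ heN₁, lt_of_le_of_ne (fun s hs => hsub s ?_)
    fun h => hax ((Ideal.mem_torsionOf_iff x a).1 (h ▸ hsub a haN₁))⟩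
  rw [(Ideal.mem_torsionOf_iff x s).1 hs]
  exact N₁.zero_mem

theorem FinitelyInjective.injective {E : Type v} [AddCommGroup E] [Module R E]
    [Module.Injective R E]
    (hwf : WellFounded fun x y : E => Ideal.torsionOf R E y < Ideal.torsionOf R E x)
    {N : Submodule R E} (hN : FinitelyInjective R N) : Module.Injective R N := by
  refine Module.injective_of_baer_along N.subtype fun I g c hgc => ?_
  obtain ⟨_, ⟨d, hd, rfl⟩, hmin⟩ :=
    hwf.has_min {x | ∃ d ∈ N, c - d = x} ⟨c, 0, N.zero_mem, sub_zero c⟩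
  have hI : ∀ r : I, (r : R) • (c - d) = 0 := by
    intro r
    by_contra hne
    have hmem : (r : R) • (c - d) ∈ N := by
      rw [smul_sub, ← hgc r]
      exact N.sub_mem (g r).2 (N.smul_mem _ hd)
    obtain ⟨e, he, hlt⟩ := hN.exists_torsionOf_lt hmem hne
    exact hmin _ ⟨d + e, N.add_mem hd he, sub_add_eq_sub_sub c d e⟩ hlt
  refine ⟨⟨d, hd⟩, fun r => Subtype.ext ?_⟩
  rw [Submodule.coe_smul, ← sub_eq_zero, ← hI r, smul_sub, ← hgc r]
  rfl

theorem LinearMap.bijective_of_injective_of_essential {A E : Type v} [AddCommGroup A]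
    [Module R A] [AddCommGroup E] [Module R E] [Module.Injective R A] (j : A →ₗ[R] E)
    (hj : Function.Injective j)
    (hess : ∀ P : Submodule R E, Disjoint P (LinearMap.range j) → P = ⊥) :
    Function.Bijective j := by
  obtain ⟨p, hp⟩ := Module.Injective.out j hj LinearMap.id
  have hker : LinearMap.ker p = ⊥ := hess _ <| Submodule.disjoint_def.2 fun x hx ⟨z, hz⟩ => by
    subst hz
    rw [show z = 0 from (hp z).symm.trans hx, map_zero]
  exact ⟨hj, fun x => ⟨p x, LinearMap.ker_eq_bot.1 hker (hp (p x))⟩⟩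

theorem FinitelyInjective.of_linearEquiv {A B : Type v} [AddCommGroup A] [Module R A]
    [AddCommGroup B] [Module R B] (e : A ≃ₗ[R] B) (h : FinitelyInjective R A) :
    FinitelyInjective R B := fun s => by
  classical
  obtain ⟨N, hN, hs⟩ := h (s.image e.symm)
  refine ⟨N.map (e : A →ₗ[R] B), Module.Injective.of_linearEquiv (e.submoduleMap N) hN,
    fun x hx => ?_⟩
  exact ⟨e.symm x, hs _ (Finset.mem_image_of_mem _ hx), e.apply_symm_apply x⟩

theorem finitelyInjective_finsupp {M : Type v} [AddCommGroup M] [Module R M]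
    [Module.Injective R M] (α : Type v) : FinitelyInjective R (α →₀ M) := fun s => by
  classical
  let S : Set α := s.biUnion Finsupp.support
  have : Module.Injective R (S → M) := Module.injective_pi
  refine ⟨Finsupp.supported M R S, Module.Injective.of_linearEquiv
    ((Finsupp.supportedEquivFinsupp S).trans (Finsupp.linearEquivFunOnFinite R M S)).symm
    inferInstance, fun x hx => ?_⟩
  exact (Finsupp.mem_supported R x).2 (Finset.coe_subset.2 (Finset.subset_biUnion_of_mem _ hx))

theorem Module.injective_finsupp_of_injective_finsupp_nat {M : Type v} [AddCommGroup M]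
    [Module R M] [Module.Injective R M] [Module.Injective R (ℕ →₀ M)] (ι : Type v) :
    Module.Injective R (ι →₀ M) := by
  have : Module.Injective R (ι → M) := Module.injective_pi
  refine Module.injective_of_baer_along Finsupp.lcoeFun fun I g c hgc => ?_
  obtain ⟨S, hSfin, hS⟩ := exists_finite_support_smul_subset (R := R) c
  have hgc' : ∀ (r : I) (i : ι), g r i = (r : R) • c i := fun r i => congrFun (hgc r) i
  refine ⟨Finsupp.ofSupportFinite (S.indicator c) (hSfin.subset (Set.support_indicator_subset)),
    fun r => Finsupp.ext fun i => ?_⟩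
  rw [hgc', Finsupp.smul_apply, Finsupp.ofSupportFinite_coe]
  by_cases hi : i ∈ S
  · rw [Set.indicator_of_mem hi]
  · have hsupp : ((r : R) • c).support ⊆ S := hS r <| by
      rw [← hgc r]
      exact (g r).hasFiniteSupport
    rw [Set.indicator_of_notMem hi, smul_zero]
    exact Function.notMem_support.1 fun h => hi (hsupp h)

theorem SigmaInjective.injective_finsupp {M : Type v} [AddCommGroup M] [Module R M]
    (h : SigmaInjective R M) (α : Type) : Module.Injective R (α →₀ M) := by
  classical
  exact Module.Injective.of_linearEquiv
    ((finsuppLEquivDirectSum R M (ULift α)).symm ≪≫ₗ Finsupp.domLCongr Equiv.ulift) (h _)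

theorem sigmaInjective_of_injective_finsupp {M : Type v} [AddCommGroup M] [Module R M]
    (h : ∀ α : Type v, Module.Injective R (α →₀ M)) : SigmaInjective R M := fun α => by
  classical
  exact Module.Injective.of_linearEquiv (finsuppLEquivDirectSum R M α) (h α)

end

theorem sigmaInjective_iff_finitelyInjective_submodules_injective (R : Type u) [Ring R]
    (M : Type v) [AddCommGroup M] [Module R M] (hMinj : Module.Injective R M)
    -- `E` is an injective hull of `M^(ℵ₀)`:
    (E : Type v) [AddCommGroup E] [Module R E] (hEinj : Module.Injective R E)
    (j : (⨁ _ : ℕ, M) →ₗ[R] E) (hj : Function.Injective j)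
    (hess : ∀ P : Submodule R E, Disjoint P (LinearMap.range j) → P = ⊥) :
    SigmaInjective R M ↔
      ∀ N : Submodule R E, FinitelyInjective R N → Module.Injective R N := by
  let eℕ := finsuppLEquivDirectSum R M ℕ
  constructor
  · intro hM N hN
    have : Module.Injective R (⨁ _ : ℕ, M) :=
      Module.Injective.of_linearEquiv eℕ (hM.injective_finsupp ℕ)
    let eE : (ℕ →₀ M) ≃ₗ[R] E :=
      eℕ ≪≫ₗ LinearEquiv.ofBijective j (j.bijective_of_injective_of_essential hj hess)
    have : Module.Injective R (ℕ →₀ E) := Module.Injective.of_linearEquiv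
      (Finsupp.curryLinearEquiv R ≪≫ₗ Finsupp.mapRange.linearEquiv eE)
      (hM.injective_finsupp (ℕ × ℕ))
    exact hN.injective wellFounded_torsionOf_gt
  · intro H
    let eR : (ℕ →₀ M) ≃ₗ[R] LinearMap.range j := eℕ ≪≫ₗ LinearEquiv.ofInjective j hj
    have : Module.Injective R (ℕ →₀ M) := Module.Injective.of_linearEquiv eR.symm <| H _ <|
      (finitelyInjective_finsupp (ULift ℕ)).of_linearEquiv
        (Finsupp.domLCongr (M := M) Equiv.ulift ≪≫ₗ eR)
    exact sigmaInjective_of_injective_finsupp Module.injective_finsupp_of_injective_finsupp_nat
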